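/- arXiv:1910.03370 — 6 statements merged into one kernel-verified Lean document; each statement's English description precedes it below -/
import Mathlib

section
/- Let L be a diagonal n×n complex matrix with pairwise distinct diagonal entries, and let G be an invertible n×n matrix. The bilinear pairing ω((X₁,D₁),(X₂,D₂)) = tr(D₁X₂ - D₂X₁ - L[X₁,X₂]) on pairs (X,D) where X is an arbitrary n×n matrix and D is a diagonal matrix, is nondegenerate: if ω((X₁,D₁),(X₂,D₂)) = 0 for all (X₁,D₁), then X₂ = 0 and D₂ = 0. -/
open Matrix

lemma trace_mul_eq_zero_imp {n : ℕ} (M : Matrix (Fin n) (Fin n) ℂ)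
    (h : ∀ X : Matrix (Fin n) (Fin n) ℂ, Matrix.trace (M * X) = 0) : M = 0 := by
  ext i j
  have := h (Matrix.single j i 1)
  simpa [Matrix.trace, Matrix.mul_apply, Matrix.single, Matrix.diag, ite_and,
    Finset.sum_ite_eq, Finset.sum_ite_eq'] using this

/-- Nondegeneracy of the pairing
`ω((X₁,D₁),(X₂,D₂)) = tr(D₁X₂ - D₂X₁ - L[X₁,X₂])` on pairs of a matrix and a
diagonal matrix, when `L` is diagonal with pairwise distinct entries. -/
theorem omega_pairing_nondegenerate (n : ℕ) (lam : Fin n → ℂ)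
    (hlam : Function.Injective lam)
    (L : Matrix (Fin n) (Fin n) ℂ) (hL : L = Matrix.diagonal lam)
    (X₂ : Matrix (Fin n) (Fin n) ℂ) (d₂ : Fin n → ℂ)
    (h : ∀ (X₁ : Matrix (Fin n) (Fin n) ℂ) (d₁ : Fin n → ℂ),
      Matrix.trace (Matrix.diagonal d₁ * X₂ - Matrix.diagonal d₂ * X₁
        - L * (X₁ * X₂ - X₂ * X₁)) = 0) :
    X₂ = 0 ∧ d₂ = 0 := by
  subst hL
  -- diagonal of X₂ vanishes
  have hdiag : ∀ i, X₂ i i = 0 := by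
    intro i
    have := h 0 (Pi.single i 1)
    simp [Matrix.trace, Matrix.diag, Matrix.mul_apply, Matrix.diagonal,
      Pi.single_apply, Finset.sum_ite_eq, Finset.sum_ite_eq'] at this
    simpa using this
  -- with d₁ = 0 : tr((D₂ + X₂ L - L X₂) X₁) = 0
  have key : Matrix.diagonal d₂ + X₂ * Matrix.diagonal lam - Matrix.diagonal lam * X₂ = 0 := by
    apply trace_mul_eq_zero_imp
    intro X
    have := h X 0
    have e : Matrix.trace ((Matrix.diagonal d₂ + X₂ * Matrix.diagonal lam
        - Matrix.diagonal lam * X₂) * X)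
        = - Matrix.trace (Matrix.diagonal (0 : Fin n → ℂ) * X₂ - Matrix.diagonal d₂ * X
          - Matrix.diagonal lam * (X * X₂ - X₂ * X)) := by
      simp only [Matrix.mul_sub, Matrix.sub_mul, Matrix.add_mul, Matrix.trace_sub,
        Matrix.trace_add, Matrix.diagonal_zero, Matrix.zero_mul, Matrix.trace_zero,
        Matrix.mul_assoc]
      rw [Matrix.trace_mul_comm X₂ (Matrix.diagonal lam * X), ← Matrix.mul_assoc,
        Matrix.mul_assoc (Matrix.diagonal lam) X X₂]
      rw [show Matrix.diagonal (0 : Fin n → ℂ) = 0 from Matrix.diagonal_zero]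
      simp only [Matrix.zero_mul, Matrix.trace_zero]
      ring
    rw [e, this, neg_zero]
  have hentry : ∀ i j, (Matrix.diagonal d₂ + X₂ * Matrix.diagonal lam
      - Matrix.diagonal lam * X₂) i j = 0 := fun i j => by rw [key]; rfl
  constructor
  · ext i j
    by_cases hij : i = j
    · subst hij; simpa using hdiag i
    · have := hentry i j
      simp [Matrix.diagonal, Matrix.mul_apply, hij, Finset.sum_ite_eq, Finset.sum_ite_eq'] at this
      have hne : lam j - lam i ≠ 0 := sub_ne_zero.mpr (fun hc => hij (hlam hc).symm)
      have : X₂ i j * (lam j - lam i) = 0 := by ring_nf; linear_combination this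
      simpa using (mul_eq_zero.mp this).resolve_right hne
  · ext i
    have := hentry i i
    simpa [Matrix.diagonal, Matrix.mul_apply, Finset.sum_ite_eq, Finset.sum_ite_eq',
      hdiag i] using this
end

section
/- The dynamical r-matrix r(L) = Σ_{i<j} (E_{ij}⊗E_{ji} - E_{ji}⊗E_{ij})/(λ_i - λ_j) satisfies the classical dynamical Yang–Baxter equation: [r^{12}, r^{13}] + [r^{12}, r^{23}] + [r^{23}, r^{31}] + Σ_{i=1}^n (∂r^{12}/∂λ_i) E³_{ii} + (∂r^{23}/∂λ_i) E¹_{ii} + (∂r^{31}/∂λ_i) E²_{ii} = 0, where superscripts denote the tensor legs in (ℂⁿ)^{⊗3} on which the operators act. -/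
/-!
Write `g_ab = (λ_a - λ_b)⁻¹`. Then `r(L)` is the flip `(a, b) ↦ (b, a)` weighted by `g_ab`, and
`∂r/∂λ_i` is the flip weighted by `∂g_ab/∂λ_i`, so every term of the equation is a generalized
permutation matrix on `(ℂⁿ)^{⊗3}`. The commutators live on the two 3-cycles
`ρ : (a, b, c) ↦ (c, a, b)` and `ρ⁻¹`. The derivative terms live on transpositions, but only
where two indices coincide, and there each transposition agrees with `ρ` or `ρ⁻¹`. Writing
`M(σ, w)` for the matrix with entry `w x` at `(x, σ x)`, the left-hand side is therefore
`M(ρ, F(a, b, c)) - M(ρ⁻¹, F(b, a, c))` with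
`F(a, b, c) = g_ab g_bc + g_bc g_ca + g_ca g_ab + [b = c] g_ab² + [c = a] g_bc² + [a = b] g_ca²`.
For distinct indices `F` vanishes because `1/(xy) + 1/(yz) + 1/(zx) = (x + y + z)/(xyz)` and
`x + y + z = 0`; if two indices coincide, the surviving product `g_ac g_ca = -g_ca²` is cancelled
by a derivative term.
-/

open Matrix
open scoped Kronecker

namespace DynamicalYB

variable (n : ℕ)

/-- Elementary matrix `E_{ij}`. -/
noncomputable def E (i j : Fin n) : Matrix (Fin n) (Fin n) ℂ :=
  Matrix.single i j 1

/-- The dynamical r-matrix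
`r(L) = Σ_{i<j} (E_{ij}⊗E_{ji} - E_{ji}⊗E_{ij})/(λ_i - λ_j)`,
viewed as a matrix on `ℂⁿ ⊗ ℂⁿ` (indexed by pairs). -/
noncomputable def rmat (lam : Fin n → ℂ) : Matrix (Fin n × Fin n) (Fin n × Fin n) ℂ :=
  ∑ p ∈ Finset.univ.filter (fun p : Fin n × Fin n => p.1 < p.2),
    (lam p.1 - lam p.2)⁻¹ •
      (E n p.1 p.2 ⊗ₖ E n p.2 p.1 - E n p.2 p.1 ⊗ₖ E n p.1 p.2)

/-- Operator acting on legs 1 and 2 of `ℂⁿ⊗ℂⁿ⊗ℂⁿ`. -/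
noncomputable def leg12 (A : Matrix (Fin n × Fin n) (Fin n × Fin n) ℂ) :
    Matrix (Fin n × Fin n × Fin n) (Fin n × Fin n × Fin n) ℂ :=
  Matrix.of fun x y => A (x.1, x.2.1) (y.1, y.2.1) * (if x.2.2 = y.2.2 then 1 else 0)

/-- Operator acting on legs 2 and 3. -/
noncomputable def leg23 (A : Matrix (Fin n × Fin n) (Fin n × Fin n) ℂ) :
    Matrix (Fin n × Fin n × Fin n) (Fin n × Fin n × Fin n) ℂ :=
  Matrix.of fun x y => (if x.1 = y.1 then 1 else 0) * A x.2 y.2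

/-- Operator acting on legs 1 and 3. -/
noncomputable def leg13 (A : Matrix (Fin n × Fin n) (Fin n × Fin n) ℂ) :
    Matrix (Fin n × Fin n × Fin n) (Fin n × Fin n × Fin n) ℂ :=
  Matrix.of fun x y => A (x.1, x.2.2) (y.1, y.2.2) * (if x.2.1 = y.2.1 then 1 else 0)

/-- Operator acting with first leg on space 3 and second leg on space 1. -/
noncomputable def leg31 (A : Matrix (Fin n × Fin n) (Fin n × Fin n) ℂ) :
    Matrix (Fin n × Fin n × Fin n) (Fin n × Fin n × Fin n) ℂ :=
  Matrix.of fun x y => A (x.2.2, x.1) (y.2.2, y.1) * (if x.2.1 = y.2.1 then 1 else 0)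

/-- Operator acting on leg 1 only. -/
noncomputable def leg1 (A : Matrix (Fin n) (Fin n) ℂ) :
    Matrix (Fin n × Fin n × Fin n) (Fin n × Fin n × Fin n) ℂ :=
  Matrix.of fun x y => A x.1 y.1 *
    (if x.2.1 = y.2.1 then 1 else 0) * (if x.2.2 = y.2.2 then 1 else 0)

/-- Operator acting on leg 2 only. -/
noncomputable def leg2 (A : Matrix (Fin n) (Fin n) ℂ) :
    Matrix (Fin n × Fin n × Fin n) (Fin n × Fin n × Fin n) ℂ :=
  Matrix.of fun x y => (if x.1 = y.1 then 1 else 0) * A x.2.1 y.2.1 *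
    (if x.2.2 = y.2.2 then 1 else 0)

/-- Operator acting on leg 3 only. -/
noncomputable def leg3 (A : Matrix (Fin n) (Fin n) ℂ) :
    Matrix (Fin n × Fin n × Fin n) (Fin n × Fin n × Fin n) ℂ :=
  Matrix.of fun x y => (if x.1 = y.1 then 1 else 0) *
    (if x.2.1 = y.2.1 then 1 else 0) * A x.2.2 y.2.2

/-- Entrywise partial derivative of `r(L)` with respect to `λ_i`. -/
noncomputable def drmat (lam : Fin n → ℂ) (i : Fin n) :
    Matrix (Fin n × Fin n) (Fin n × Fin n) ℂ :=
  Matrix.of fun a b =>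
    deriv (fun t : ℂ => rmat n (Function.update lam i t) a b) (lam i)

end DynamicalYB

section MonomialMatrix

variable {ι R : Type*} [DecidableEq ι]

def monomialMatrix [Zero R] (σ : ι → ι) (w : ι → R) : Matrix ι ι R :=
  Matrix.of fun x y => if y = σ x then w x else 0

theorem monomialMatrix_mul [Fintype ι] [NonUnitalNonAssocSemiring R] (σ τ : ι → ι)
    (w v : ι → R) :
    monomialMatrix σ w * monomialMatrix τ v =
      monomialMatrix (τ ∘ σ) fun x => w x * v (σ x) := by
  ext x y
  simp only [monomialMatrix, mul_apply, of_apply, Function.comp_apply, mul_ite, ite_mul,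
    mul_zero, zero_mul]
  rw [Finset.sum_eq_single (σ x) (fun j _ hj => by simp [hj]) (by simp)]
  simp

theorem monomialMatrix_add [AddZeroClass R] (σ : ι → ι) (w v : ι → R) :
    monomialMatrix σ w + monomialMatrix σ v = monomialMatrix σ fun x => w x + v x := by
  ext x y
  by_cases h : y = σ x <;> simp [monomialMatrix, h]

theorem monomialMatrix_sub [AddGroup R] (σ : ι → ι) (w v : ι → R) :
    monomialMatrix σ w - monomialMatrix σ v = monomialMatrix σ fun x => w x - v x := by
  ext x y
  by_cases h : y = σ x <;> simp [monomialMatrix, h]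

theorem monomialMatrix_sum {κ : Type*} [AddCommMonoid R] (s : Finset κ) (σ : ι → ι)
    (w : κ → ι → R) :
    ∑ k ∈ s, monomialMatrix σ (w k) = monomialMatrix σ fun x => ∑ k ∈ s, w k x := by
  ext x y
  simp [monomialMatrix, Matrix.sum_apply, Finset.sum_ite_irrel]

theorem monomialMatrix_zero [Zero R] (σ : ι → ι) : monomialMatrix σ (fun _ => (0 : R)) = 0 := by
  ext x y
  simp [monomialMatrix]

theorem monomialMatrix_congr [Zero R] {σ τ : ι → ι} {w : ι → R}
    (h : ∀ x, w x ≠ 0 → σ x = τ x) : monomialMatrix σ w = monomialMatrix τ w := by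
  ext x y
  simp only [monomialMatrix, of_apply]
  by_cases hx : w x = 0
  · simp [hx]
  · rw [h x hx]

theorem monomialMatrix_ite_sub_ite [AddGroup R] {σ τ₁ τ₂ : ι → ι} {p q : ι → Prop}
    [DecidablePred p] [DecidablePred q] {w v : ι → R} (h₁ : ∀ x, p x → σ x = τ₁ x)
    (h₂ : ∀ x, q x → σ x = τ₂ x) :
    monomialMatrix σ (fun x => (if p x then w x else 0) - if q x then v x else 0) =
      monomialMatrix τ₁ (fun x => if p x then w x else 0) -
        monomialMatrix τ₂ (fun x => if q x then v x else 0) := by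
  rw [monomialMatrix_congr (σ := τ₁) (τ := σ), monomialMatrix_congr (σ := τ₂) (τ := σ),
    monomialMatrix_sub]
  all_goals intro x hx
  · exact (h₂ x (by by_contra h; simp [h] at hx)).symm
  · exact (h₁ x (by by_contra h; simp [h] at hx)).symm

end MonomialMatrix

namespace DynamicalYB

variable (n : ℕ)

section CyclicIdentity

variable {α K : Type*}

def rotate (x : α × α × α) : α × α × α := (x.2.2, x.1, x.2.1)

def rotateInv (x : α × α × α) : α × α × α := (x.2.1, x.2.2, x.1)

variable [Field K] [DecidableEq α]

def cyclicTerm (lam : α → K) (a b c : α) : K :=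
  (lam a - lam b)⁻¹ * (lam b - lam c)⁻¹ + (lam b - lam c)⁻¹ * (lam c - lam a)⁻¹ +
    (lam c - lam a)⁻¹ * (lam a - lam b)⁻¹

def derivTerm (lam : α → K) (a b c : α) : K :=
  (if b = c then ((lam a - lam b) ^ 2)⁻¹ else 0) +
    (if c = a then ((lam b - lam c) ^ 2)⁻¹ else 0) +
      (if a = b then ((lam c - lam a) ^ 2)⁻¹ else 0)

theorem cyclicTerm_add_derivTerm_rotate (lam : α → K) (a b c : α) :
    cyclicTerm lam b c a + derivTerm lam b c a = cyclicTerm lam a b c + derivTerm lam a b c := by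
  unfold cyclicTerm derivTerm
  ring

theorem cyclicTerm_add_derivTerm_self_left {lam : α → K} (hlam : Function.Injective lam)
    (a c : α) : cyclicTerm lam a a c + derivTerm lam a a c = 0 := by
  unfold cyclicTerm derivTerm
  by_cases hca : c = a
  · simp [hca]
  · have hne : ∀ {x y}, x ≠ y → lam x - lam y ≠ 0 := fun h => sub_ne_zero.2 (hlam.ne h)
    simp only [hca, Ne.symm hca, sub_self, _root_.inv_zero, zero_mul, mul_zero, if_true, if_false]
    field_simp [hne hca, hne (Ne.symm hca)]
    ring

theorem cyclicTerm_add_derivTerm {lam : α → K} (hlam : Function.Injective lam) (a b c : α) :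
    cyclicTerm lam a b c + derivTerm lam a b c = 0 := by
  by_cases hab : a = b
  · subst hab
    exact cyclicTerm_add_derivTerm_self_left hlam a c
  by_cases hbc : b = c
  · subst hbc
    rw [← cyclicTerm_add_derivTerm_rotate]
    exact cyclicTerm_add_derivTerm_self_left hlam b a
  by_cases hca : c = a
  · subst hca
    rw [← cyclicTerm_add_derivTerm_rotate, ← cyclicTerm_add_derivTerm_rotate]
    exact cyclicTerm_add_derivTerm_self_left hlam c b
  have hne : ∀ {x y}, x ≠ y → lam x - lam y ≠ 0 := fun h => sub_ne_zero.2 (hlam.ne h)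
  simp only [cyclicTerm, derivTerm, hab, hbc, hca, if_false, add_zero]
  field_simp [hne hab, hne hbc, hne hca]
  ring

end CyclicIdentity

section MonomialForm

variable {n}

theorem E_self_eq_monomialMatrix (i : Fin n) : E n i i = monomialMatrix id (Pi.single i 1) := by
  ext x y
  simp only [E, single_apply, monomialMatrix, of_apply, id, Pi.single_apply]
  aesop

/-- Since `(λ_a - λ_a)⁻¹ = 0` in Lean, the weight also vanishes on the diagonal `a = b`. -/
theorem rmat_eq_monomialMatrix (lam : Fin n → ℂ) :
    rmat n lam = monomialMatrix Prod.swap fun p => (lam p.1 - lam p.2)⁻¹ := by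
  have hE : ∀ i j, E n i j ⊗ₖ E n j i = single (i, j) (j, i) 1 := fun i j => by
    simp [E, single_kronecker_single]
  have hswap : ∀ p : Fin n × Fin n, (p.2, p.1) = p.swap := fun _ => rfl
  ext x y
  simp only [rmat, hE, hswap, Prod.mk.eta, Matrix.sum_apply, Matrix.smul_apply, smul_eq_mul,
    Matrix.sub_apply, single_apply, monomialMatrix, of_apply]
  by_cases hy : y = x.swap
  · subst hy
    simp only [Prod.swap_swap, Prod.swap_eq_iff_eq_swap, and_self, mul_sub, mul_ite, mul_one,
      mul_zero, Finset.sum_sub_distrib, Finset.sum_ite_eq', Finset.mem_filter, Finset.mem_univ,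
      true_and, if_true]
    rcases lt_trichotomy x.1 x.2 with h | h | h
    · simp [h, h.not_gt]
    · simp [h]
    · simp [h, h.not_gt, ← inv_neg]
  · refine (Finset.sum_eq_zero fun p _ => ?_).trans (if_neg hy).symm
    aesop

theorem hasDerivAt_inv_sub_update {ι : Type*} [DecidableEq ι] (lam : ι → ℂ) (i : ι) {a b : ι}
    (hab : lam a ≠ lam b) :
    HasDerivAt (fun t => (Function.update lam i t a - Function.update lam i t b)⁻¹)
      (((Pi.single i 1 : ι → ℂ) b - (Pi.single i 1 : ι → ℂ) a) / (lam a - lam b) ^ 2)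
      (lam i) := by
  have hupdate := hasDerivAt_pi.1 (hasDerivAt_update lam i (lam i))
  have h := ((hupdate a).fun_sub (hupdate b)).fun_inv (by simpa [sub_eq_zero] using hab)
  rwa [Function.update_eq_self, neg_sub] at h

theorem drmat_eq_monomialMatrix {lam : Fin n → ℂ} (hlam : Function.Injective lam) (i : Fin n) :
    drmat n lam i = monomialMatrix Prod.swap fun p =>
      ((Pi.single i 1 : Fin n → ℂ) p.2 - (Pi.single i 1 : Fin n → ℂ) p.1) /
        (lam p.1 - lam p.2) ^ 2 := by
  ext x y
  simp only [drmat, rmat_eq_monomialMatrix, monomialMatrix, of_apply]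
  split_ifs
  · by_cases hx : x.1 = x.2
    · simp [hx]
    · exact (hasDerivAt_inv_sub_update lam i (hlam.ne hx)).deriv
  · simp

theorem leg12_monomialMatrix (σ : Fin n × Fin n → Fin n × Fin n) (w : Fin n × Fin n → ℂ) :
    leg12 n (monomialMatrix σ w) = monomialMatrix
      (fun x => ((σ (x.1, x.2.1)).1, (σ (x.1, x.2.1)).2, x.2.2)) fun x => w (x.1, x.2.1) := by
  ext x y
  simp only [leg12, monomialMatrix, of_apply, Prod.ext_iff]
  split_ifs <;> simp_all

theorem leg13_monomialMatrix (σ : Fin n × Fin n → Fin n × Fin n) (w : Fin n × Fin n → ℂ) :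
    leg13 n (monomialMatrix σ w) = monomialMatrix
      (fun x => ((σ (x.1, x.2.2)).1, x.2.1, (σ (x.1, x.2.2)).2)) fun x => w (x.1, x.2.2) := by
  ext x y
  simp only [leg13, monomialMatrix, of_apply, Prod.ext_iff]
  split_ifs <;> simp_all

theorem leg23_monomialMatrix (σ : Fin n × Fin n → Fin n × Fin n) (w : Fin n × Fin n → ℂ) :
    leg23 n (monomialMatrix σ w) = monomialMatrix (fun x => (x.1, σ x.2)) fun x => w x.2 := by
  ext x y
  simp only [leg23, monomialMatrix, of_apply, Prod.ext_iff]
  split_ifs <;> simp_all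

theorem leg31_monomialMatrix (σ : Fin n × Fin n → Fin n × Fin n) (w : Fin n × Fin n → ℂ) :
    leg31 n (monomialMatrix σ w) = monomialMatrix
      (fun x => ((σ (x.2.2, x.1)).2, x.2.1, (σ (x.2.2, x.1)).1)) fun x => w (x.2.2, x.1) := by
  ext x y
  simp only [leg31, monomialMatrix, of_apply, Prod.ext_iff]
  split_ifs <;> simp_all

theorem leg1_monomialMatrix (σ : Fin n → Fin n) (w : Fin n → ℂ) :
    leg1 n (monomialMatrix σ w) = monomialMatrix (fun x => (σ x.1, x.2)) fun x => w x.1 := by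
  ext x y
  simp only [leg1, monomialMatrix, of_apply, Prod.ext_iff]
  split_ifs <;> simp_all

theorem leg2_monomialMatrix (σ : Fin n → Fin n) (w : Fin n → ℂ) :
    leg2 n (monomialMatrix σ w) =
      monomialMatrix (fun x => (x.1, σ x.2.1, x.2.2)) fun x => w x.2.1 := by
  ext x y
  simp only [leg2, monomialMatrix, of_apply, Prod.ext_iff]
  split_ifs <;> simp_all

theorem leg3_monomialMatrix (σ : Fin n → Fin n) (w : Fin n → ℂ) :
    leg3 n (monomialMatrix σ w) =
      monomialMatrix (fun x => (x.1, x.2.1, σ x.2.2)) fun x => w x.2.2 := by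
  ext x y
  simp only [leg3, monomialMatrix, of_apply, Prod.ext_iff]
  split_ifs <;> simp_all

theorem commutators_eq_monomialMatrix (lam : Fin n → ℂ) :
    (leg12 n (rmat n lam) * leg13 n (rmat n lam)
      - leg13 n (rmat n lam) * leg12 n (rmat n lam))
    + (leg12 n (rmat n lam) * leg23 n (rmat n lam)
      - leg23 n (rmat n lam) * leg12 n (rmat n lam))
    + (leg23 n (rmat n lam) * leg31 n (rmat n lam)
      - leg31 n (rmat n lam) * leg23 n (rmat n lam)) =
    monomialMatrix rotate (fun x => cyclicTerm lam x.1 x.2.1 x.2.2) -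
      monomialMatrix rotateInv (fun x => cyclicTerm lam x.2.1 x.1 x.2.2) := by
  simp only [rmat_eq_monomialMatrix, leg12_monomialMatrix, leg13_monomialMatrix,
    leg23_monomialMatrix, leg31_monomialMatrix, monomialMatrix_mul, Function.comp_def,
    Prod.fst_swap, Prod.snd_swap, Prod.swap_prod_mk]
  -- Splitting the triples with `Prod.mk.injEq` also rebuilds the `Decidable` instances of the
  -- six conditions, so that `split_ifs` recognizes that only two distinct ones occur.
  ext ⟨a, b, c⟩ ⟨d, e, f⟩
  have hneg : ∀ u v : ℂ, (v - u)⁻¹ = -(u - v)⁻¹ := fun u v => by rw [← inv_neg, neg_sub]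
  simp only [monomialMatrix, of_apply, Matrix.sub_apply, Matrix.add_apply, rotate, rotateInv,
    cyclicTerm, Prod.mk.injEq, hneg (lam a) (lam b), hneg (lam b) (lam c), hneg (lam c) (lam a)]
  split_ifs <;> ring

theorem derivativeTerms_eq_monomialMatrix {lam : Fin n → ℂ} (hlam : Function.Injective lam) :
    ∑ i : Fin n,
        (leg12 n (drmat n lam i) * leg3 n (E n i i)
          + leg23 n (drmat n lam i) * leg1 n (E n i i)
          + leg31 n (drmat n lam i) * leg2 n (E n i i)) =
    monomialMatrix rotate (fun x => derivTerm lam x.1 x.2.1 x.2.2) -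
      monomialMatrix rotateInv (fun x => derivTerm lam x.2.1 x.1 x.2.2) := by
  simp only [drmat_eq_monomialMatrix hlam, E_self_eq_monomialMatrix, leg12_monomialMatrix,
    leg23_monomialMatrix, leg31_monomialMatrix, leg1_monomialMatrix, leg2_monomialMatrix,
    leg3_monomialMatrix, monomialMatrix_mul, Function.comp_def, id, Prod.swap,
    Finset.sum_add_distrib, monomialMatrix_sum, Pi.single_apply, mul_ite, mul_one, mul_zero,
    Finset.sum_ite_eq, Finset.mem_univ, if_true, sub_div, ite_div, zero_div, one_div]
  rw [monomialMatrix_ite_sub_ite (τ₁ := rotate) (τ₂ := rotateInv),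
    monomialMatrix_ite_sub_ite (τ₁ := rotate) (τ₂ := rotateInv),
    monomialMatrix_ite_sub_ite (τ₁ := rotate) (τ₂ := rotateInv),
    ← add_sub_add_comm, ← add_sub_add_comm, monomialMatrix_add, monomialMatrix_add,
    monomialMatrix_add, monomialMatrix_add]
  · congr 2
    funext x
    simp only [derivTerm]
    split_ifs <;> ring
  all_goals intro x hx; simp [rotate, rotateInv, hx]

end MonomialForm

/-- The classical dynamical Yang–Baxter equation for the dynamical r-matrix
`r(L)`:
`[r¹², r¹³] + [r¹², r²³] + [r²³, r³¹]
  + Σ_i (∂r¹²/∂λ_i) E³ᵢᵢ + (∂r²³/∂λ_i) E¹ᵢᵢ + (∂r³¹/∂λ_i) E²ᵢᵢ = 0`. -/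
theorem dynamical_yang_baxter (lam : Fin n → ℂ) (hlam : Function.Injective lam) :
    (leg12 n (rmat n lam) * leg13 n (rmat n lam)
      - leg13 n (rmat n lam) * leg12 n (rmat n lam))
    + (leg12 n (rmat n lam) * leg23 n (rmat n lam)
      - leg23 n (rmat n lam) * leg12 n (rmat n lam))
    + (leg23 n (rmat n lam) * leg31 n (rmat n lam)
      - leg31 n (rmat n lam) * leg23 n (rmat n lam))
    + ∑ i : Fin n,
        (leg12 n (drmat n lam i) * leg3 n (E n i i)
          + leg23 n (drmat n lam i) * leg1 n (E n i i)
          + leg31 n (drmat n lam i) * leg2 n (E n i i)) = 0 := by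
  rw [commutators_eq_monomialMatrix, derivativeTerms_eq_monomialMatrix hlam,
    ← add_sub_add_comm, monomialMatrix_add, monomialMatrix_add]
  simp only [cyclicTerm_add_derivTerm hlam, monomialMatrix_zero, sub_zero]

end DynamicalYB
end

section
/- Define the Poisson tensor on functions of (G, λ₁,…,λ_n) (G an invertible n×n matrix, λ's distinct) by the relations {G_{bj}, G_{cℓ}} = G_{bℓ}G_{cj}/(λ_j - λ_ℓ) for j ≠ ℓ, {G_{bj}, G_{cj}} = 0, {G_{bk}, λ_ℓ} = -G_{bk}δ_{ℓk}, and {λ_j, λ_k} = 0. Then the matrix entries of A = G L G⁻¹ (with L = diag(λ₁,…,λ_n)) satisfy the Kirillov–Kostant bracket: {A_{ab}, A_{cd}} = A_{ad}δ_{bc} - A_{cb}δ_{ad}. -/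
/-!
Fixing the first argument, `D = P x` is a derivation, and applied entrywise to `A = G L G⁻¹` it
gives `D A = G (Y L - L Y + D L) G⁻¹` with `Y = G⁻¹ (D G)`. For `x = G_{cℓ}` the relations force
`Y L - L Y + D L = -E_{ℓc} G`, and for `x = λ_ℓ` one finds `Y = E_{ℓℓ}`, which commutes with `L`.
By antisymmetry, `{A_{ab}, G} = E_{ba} G` and `{A_{ab}, L} = 0`: the entries of `A` generate left
multiplication on `G`. Hence `{A_{ab}, A} = [E_{ba}, A]`, which is the Kirillov–Kostant bracket.
-/

open Matrix

namespace Derivation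

variable {R : Type*} [CommRing R]

def ofLeibniz (f : R → R) (hadd : ∀ a b, f (a + b) = f a + f b)
    (hleib : ∀ a b, f (a * b) = f a * b + a * f b) : Derivation ℤ R R :=
  mk' (AddMonoidHom.mk' f hadd).toIntLinearMap fun a b => by
    simp [hleib, smul_eq_mul]; ring

variable {S : Type*} [CommSemiring S] [Algebra S R] (D : Derivation S R R)
variable {n : Type*} [DecidableEq n]

theorem matrix_map_one : (1 : Matrix n n R).map D = 0 := by
  ext i j
  by_cases h : i = j <;> simp [one_apply, h]

theorem matrix_map_mul {l m o : Type*} [Fintype m] (M : Matrix l m R) (N : Matrix m o R) :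
    (M * N).map D = M.map D * N + M * N.map D := by
  ext i k
  simp only [Matrix.add_apply, map_apply, mul_apply, map_sum, leibniz, smul_eq_mul,
    ← Finset.sum_add_distrib]
  exact Finset.sum_congr rfl fun j _ => by ring

variable [Fintype n]

theorem matrix_map_of_mul_eq_one {G H : Matrix n n R} (hGH : G * H = 1) (hHG : H * G = 1) :
    H.map D = -(H * G.map D * H) := by
  have h := congrArg (·.map D) hGH
  simp only [matrix_map_mul, matrix_map_one] at h
  calc H.map D = H * (G * H.map D) := by rw [← Matrix.mul_assoc, hHG, Matrix.one_mul]
    _ = -(H * G.map D * H) := by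
      rw [eq_neg_of_add_eq_zero_right h, Matrix.mul_neg, Matrix.mul_assoc]

theorem matrix_map_conj {G H : Matrix n n R} (hGH : G * H = 1) (hHG : H * G = 1)
    (L : Matrix n n R) :
    (G * L * H).map D = G * (H * G.map D * L - L * (H * G.map D) + L.map D) * H := by
  rw [matrix_map_mul, matrix_map_mul, matrix_map_of_mul_eq_one D hGH hHG]
  simp only [Matrix.mul_add, Matrix.mul_sub, Matrix.add_mul, Matrix.sub_mul, Matrix.mul_neg,
    ← Matrix.mul_assoc, hGH, Matrix.one_mul]
  abel

theorem matrix_map_conj_of_map_eq_mul {G H : Matrix n n R} (hGH : G * H = 1) (hHG : H * G = 1)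
    {L E : Matrix n n R} (hG : G.map D = E * G) (hL : L.map D = 0) :
    (G * L * H).map D = E * (G * L * H) - G * L * H * E := by
  have hGH' : ∀ X, G * (H * X) = X := fun X => by rw [← Matrix.mul_assoc, hGH, Matrix.one_mul]
  rw [matrix_map_conj D hGH hHG, hG, hL, add_zero]
  simp only [Matrix.mul_sub, Matrix.sub_mul, Matrix.mul_assoc, hGH', hGH, Matrix.mul_one]

end Derivation

section QuadraticBracket

variable {R : Type*} [CommRing R] {n : Type*} [Fintype n] [DecidableEq n]

theorem map_bracket_G_entry_conj_diagonal (P : R → R → R)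
    (hadd : ∀ a b c, P a (b + c) = P a b + P a c)
    (hleib : ∀ a b c, P a (b * c) = P a b * c + b * P a c)
    {G H : Matrix n n R} (hGH : G * H = 1) (hHG : H * G = 1) {lam : n → R}
    (hunit : ∀ j ℓ : n, j ≠ ℓ → IsUnit (lam j - lam ℓ))
    (hGG : ∀ b c j ℓ : n, j ≠ ℓ → (lam j - lam ℓ) * P (G b j) (G c ℓ) = G b ℓ * G c j)
    (hGGdiag : ∀ b c j : n, P (G b j) (G c j) = 0)
    (hGlam : ∀ b k ℓ : n, P (G b k) (lam ℓ) = -(if ℓ = k then G b k else 0))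
    (c ℓ : n) :
    (G * diagonal lam * H).map (P (G c ℓ)) = -(G * single ℓ c 1) := by
  set D := Derivation.ofLeibniz (P (G c ℓ)) (hadd _) (hleib _)
  have hD : ⇑D = P (G c ℓ) := rfl
  set Y := H * G.map D
  have hY_col : ∀ j, Y j ℓ = 0 := by simp [Y, mul_apply, hD, hGGdiag]
  have hY : ∀ j i, i ≠ ℓ → (lam ℓ - lam i) * Y j i = if j = ℓ then G c i else 0 := by
    intro j i hi
    calc (lam ℓ - lam i) * Y j i = ∑ p, H j p * G p ℓ * G c i := by
          simp only [Y, mul_apply, map_apply, hD, Finset.mul_sum]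
          refine Finset.sum_congr rfl fun p _ => ?_
          rw [mul_left_comm, hGG c p ℓ i hi.symm]
          ring
      _ = (H * G) j ℓ * G c i := by rw [mul_apply, Finset.sum_mul]
      _ = if j = ℓ then G c i else 0 := by simp [hHG, one_apply]
  have hYL : Y * diagonal lam - diagonal lam * Y + (diagonal lam).map D = -(single ℓ c 1 * G) := by
    rw [diagonal_map (map_zero D)]
    ext j i
    simp only [Matrix.add_apply, Matrix.sub_apply, Matrix.neg_apply, mul_diagonal, diagonal_mul,
      diagonal_apply, hD, hGlam]
    by_cases hi : i = ℓ
    · subst hi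
      by_cases hj : j = i <;> simp [hj, hY_col]
    · by_cases hj : j = ℓ
      · subst hj
        have h := hY j i hi
        rw [if_pos rfl] at h
        simp only [Ne.symm hi, ↓reduceIte, add_zero, single_mul_apply_same, one_mul]
        linear_combination -h
      · have hYji : Y j i = 0 := (hunit ℓ i (Ne.symm hi)).mul_right_eq_zero.mp (by simp [hY j i hi, hj])
        simp [hYji, hj]
  rw [← hD, D.matrix_map_conj hGH hHG, hYL]
  simp [Matrix.mul_assoc, hGH]

theorem map_bracket_lam_conj_diagonal (P : R → R → R) (hskew : ∀ a b, P a b = -P b a)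
    (hadd : ∀ a b c, P a (b + c) = P a b + P a c)
    (hleib : ∀ a b c, P a (b * c) = P a b * c + b * P a c)
    {G H : Matrix n n R} (hGH : G * H = 1) (hHG : H * G = 1) {lam : n → R}
    (hGlam : ∀ b k ℓ : n, P (G b k) (lam ℓ) = -(if ℓ = k then G b k else 0))
    (hll : ∀ j k : n, P (lam j) (lam k) = 0) (ℓ : n) :
    (G * diagonal lam * H).map (P (lam ℓ)) = 0 := by
  set D := Derivation.ofLeibniz (P (lam ℓ)) (hadd _) (hleib _)
  have hD : ⇑D = P (lam ℓ) := rfl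
  have hG : H * G.map D = diagonal (Pi.single ℓ 1) := by
    have : G.map D = G * diagonal (Pi.single ℓ 1) := by
      ext p i
      simp [hD, hskew (lam ℓ), hGlam, Pi.single_apply, eq_comm]
    rw [this, ← Matrix.mul_assoc, hHG, Matrix.one_mul]
  have hL : (diagonal lam).map D = 0 := by
    rw [diagonal_map (map_zero D)]
    simp [hD, hll]
  rw [← hD, D.matrix_map_conj hGH hHG, hG, hL, diagonal_mul_diagonal, diagonal_mul_diagonal]
  simp [mul_comm]

theorem bracket_conj_diagonal_of_bracket_G_of_bracket_lam (P : R → R → R)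
    (hadd : ∀ a b c, P a (b + c) = P a b + P a c)
    (hleib : ∀ a b c, P a (b * c) = P a b * c + b * P a c)
    {G H : Matrix n n R} (hGH : G * H = 1) (hHG : H * G = 1) {lam : n → R} {a b : n}
    (hAG : ∀ c ℓ, P ((G * diagonal lam * H) a b) (G c ℓ) = if c = b then G a ℓ else 0)
    (hAlam : ∀ i, P ((G * diagonal lam * H) a b) (lam i) = 0) (c d : n) :
    P ((G * diagonal lam * H) a b) ((G * diagonal lam * H) c d) =
      (G * diagonal lam * H) a d * (if b = c then 1 else 0) -
        (G * diagonal lam * H) c b * (if a = d then 1 else 0) := by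
  set D := Derivation.ofLeibniz (P ((G * diagonal lam * H) a b)) (hadd _) (hleib _)
  have hD : ⇑D = P ((G * diagonal lam * H) a b) := rfl
  have hG : G.map D = single b a 1 * G := by
    ext c ℓ
    by_cases hc : c = b
    · subst hc; simp [hD, hAG]
    · simp [hD, hAG, hc]
  have hL : (diagonal lam).map D = 0 := by
    rw [diagonal_map (map_zero D)]
    simp [hD, hAlam]
  rw [← hD, ← map_apply (f := ⇑D), D.matrix_map_conj_of_map_eq_mul hGH hHG hG hL]
  by_cases hbc : b = c <;> by_cases had : a = d <;> simp [hbc, had, eq_comm]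

end QuadraticBracket

/-- The quadratic Poisson bracket
`{G_{bj}, G_{cℓ}} = G_{bℓ}G_{cj}/(λ_j - λ_ℓ)` (for `j ≠ ℓ`),
`{G_{bj}, G_{cj}} = 0`, `{G_{bk}, λ_ℓ} = -G_{bk}δ_{ℓk}`, `{λ_j, λ_k} = 0`
on the (commutative) algebra of functions of `(G, λ)` implies that
`A = G L G⁻¹` with `L = diag(λ₁,…,λ_n)` satisfies the Kirillov–Kostant bracket
`{A_{ab}, A_{cd}} = A_{ad}δ_{bc} - A_{cb}δ_{ad}`. -/
theorem quadratic_bracket_implies_KirillovKostant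
    {R : Type*} [CommRing R] (n : ℕ)
    (P : R → R → R)
    -- `P` is an antisymmetric biderivation:
    (hskew : ∀ a b, P a b = -P b a)
    (hadd : ∀ a b c, P a (b + c) = P a b + P a c)
    (hleib : ∀ a b c, P a (b * c) = P a b * c + b * P a c)
    (G Ginv : Matrix (Fin n) (Fin n) R) (lam : Fin n → R)
    (hGinv₁ : G * Ginv = 1) (hGinv₂ : Ginv * G = 1)
    (hunit : ∀ j ℓ : Fin n, j ≠ ℓ → IsUnit (lam j - lam ℓ))
    -- bracket relations on the generators:
    (hGG : ∀ (b c j ℓ : Fin n), j ≠ ℓ →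
      (lam j - lam ℓ) * P (G b j) (G c ℓ) = G b ℓ * G c j)
    (hGGdiag : ∀ (b c j : Fin n), P (G b j) (G c j) = 0)
    (hGlam : ∀ (b k ℓ : Fin n), P (G b k) (lam ℓ) = -(if ℓ = k then G b k else 0))
    (hll : ∀ j k : Fin n, P (lam j) (lam k) = 0)
    (A : Matrix (Fin n) (Fin n) R) (hA : A = G * Matrix.diagonal lam * Ginv) :
    ∀ a b c d : Fin n,
      P (A a b) (A c d) =
        A a d * (if b = c then 1 else 0) - A c b * (if a = d then 1 else 0) := by
  subst hA
  intro a b c d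
  refine bracket_conj_diagonal_of_bracket_G_of_bracket_lam P hadd hleib hGinv₁ hGinv₂
    (fun c ℓ => ?_) (fun i => ?_) c d
  · rw [hskew, ← map_apply (f := P (G c ℓ)), map_bracket_G_entry_conj_diagonal P hadd hleib
      hGinv₁ hGinv₂ hunit hGG hGGdiag hGlam c ℓ]
    by_cases hc : c = b
    · subst hc; simp
    · simp [hc, Ne.symm hc]
  · rw [hskew, ← map_apply (f := P (lam i)), map_bracket_lam_conj_diagonal P hskew hadd hleib
      hGinv₁ hGinv₂ hGlam hll i]
    simp
end

section
/- For x ∈ ℂˣ the 3×3 matrix A(x) = (1/x)·[[0,0,1],[0,-1,-1],[x³, x³+1, 1]] lies in SL(3,ℂ) (det A(x) = 1) and satisfies A(x)³ = 1. -/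
open Matrix

/-! `A(x) = x⁻¹ • M(x³)` where `M(t) = [[0,0,1],[0,-1,-1],[t,t+1,1]]`. Over any commutative ring
`det M(t) = t` and `M(t)³ = t • 1`, so scaling by `x⁻¹` turns both into `1`. -/

variable {R : Type*} [CommRing R]

def cubeRootMatrix (t : R) : Matrix (Fin 3) (Fin 3) R :=
  !![0, 0, 1; 0, -1, -1; t, t + 1, 1]

theorem det_cubeRootMatrix (t : R) : (cubeRootMatrix t).det = t := by
  simp [cubeRootMatrix, det_fin_three]

theorem cubeRootMatrix_pow_three (t : R) : cubeRootMatrix t ^ 3 = t • 1 := by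
  rw [pow_three]
  ext i j
  fin_cases i <;> fin_cases j <;>
    simp [cubeRootMatrix, mul_apply, Fin.sum_univ_three] <;> ring

/-- For `x ≠ 0`, the matrix `A(x) = (1/x)·[[0,0,1],[0,-1,-1],[x³,x³+1,1]]`
lies in `SL(3,ℂ)` (`det A(x) = 1`) and satisfies `A(x)³ = 1`. -/
theorem SL3_A_cubed (x : ℂ) (hx : x ≠ 0) :
    let A : Matrix (Fin 3) (Fin 3) ℂ :=
      x⁻¹ • !![0, 0, 1; 0, -1, -1; x ^ 3, x ^ 3 + 1, 1]
    A.det = 1 ∧ A ^ 3 = 1 := by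
  have hx3 : x⁻¹ ^ 3 * x ^ 3 = 1 := by rw [← mul_pow, inv_mul_cancel₀ hx, one_pow]
  change (x⁻¹ • cubeRootMatrix (x ^ 3)).det = 1 ∧ (x⁻¹ • cubeRootMatrix (x ^ 3)) ^ 3 = 1
  refine ⟨?_, ?_⟩
  · rw [det_smul, det_cubeRootMatrix, Fintype.card_fin, hx3]
  · rw [smul_pow, cubeRootMatrix_pow_three, smul_smul, hx3, one_smul]
end

section
/- Suppose (p_i,q_i) and (P_i,Q_i) (i=1,…,d) are two Darboux coordinate systems related by a time-dependent canonical transformation, i.e. Σ_i dP_i∧dQ_i = Σ_i d_M p_i ∧ d_M q_i, where d_M records that p_i,q_i evolve in the times t₁,…,t_N by Hamilton's equations ∂p_i/∂t_k = -∂H_k/∂q_i, ∂q_i/∂t_k = ∂H_k/∂p_i with Hamiltonians H_k satisfying {H_k,H_ℓ} = 0 and ∂_{t_ℓ}H_k = ∂_{t_k}H_ℓ. Then Σ_i dP_i∧dQ_i = Σ_i dp_i∧dq_i - Σ_k dH_k∧dt_k, where d is the full differential in (p,q,t). -/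
namespace TimeDependentCanonical

variable (d N : ℕ)

/-- The extended phase space with coordinates `(P, Q, t)` (resp. `(p, q, t)`). -/
abbrev E (d N : ℕ) := (Fin d → ℝ) × (Fin d → ℝ) × (Fin N → ℝ)

/-- The "wedge" `df ∧ dg` evaluated at `x` on tangent vectors `u, v`. -/
noncomputable def wedge (f g : E d N → ℝ) (x u v : E d N) : ℝ :=
  fderiv ℝ f x u * fderiv ℝ g x v - fderiv ℝ f x v * fderiv ℝ g x u

/-- The differential `d_M f` (differential at fixed times) evaluated on `u`. -/
noncomputable def dM (f : E d N → ℝ) (x u : E d N) : ℝ :=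
  fderiv ℝ f x (u.1, u.2.1, (0 : Fin N → ℝ))


lemma vec_decomp (w : E d N) :
    w = (∑ i : Fin d, w.1 i • ((Pi.single i 1 : Fin d → ℝ), (0 : Fin d → ℝ), (0 : Fin N → ℝ)))
      + (∑ i : Fin d, w.2.1 i • ((0 : Fin d → ℝ), (Pi.single i 1 : Fin d → ℝ), (0 : Fin N → ℝ)))
      + (∑ k : Fin N, w.2.2 k • ((0 : Fin d → ℝ), (0 : Fin d → ℝ), (Pi.single k 1 : Fin N → ℝ))) := by
  have h1 : ∀ (n : ℕ) (v : Fin n → ℝ), v = ∑ i, v i • (Pi.single i 1 : Fin n → ℝ) := by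
    intro n v
    ext j
    simp [Finset.sum_apply, Pi.single_apply]
  refine Prod.ext ?_ (Prod.ext ?_ ?_) <;>
    simp [Prod.fst_sum, Prod.snd_sum, Prod.smul_mk] <;> exact h1 _ _

lemma clm_expand (L : E d N →L[ℝ] ℝ) (w : E d N) :
    L w = ∑ i : Fin d, w.1 i * L (Pi.single i 1, 0, 0)
        + ∑ i : Fin d, w.2.1 i * L (0, Pi.single i 1, 0)
        + ∑ k : Fin N, w.2.2 k * L (0, 0, Pi.single k 1) := by
  conv_lhs => rw [vec_decomp d N w]
  simp only [map_add, map_sum, map_smul, smul_eq_mul]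

lemma dM_eq (f : E d N → ℝ) (x w : E d N) :
    dM d N f x w = fderiv ℝ f x w
      - ∑ k : Fin N, w.2.2 k * fderiv ℝ f x (0, 0, Pi.single k 1) := by
  have hsplit : w = ((w.1, w.2.1, (0 : Fin N → ℝ)) : E d N) + ((0, 0, w.2.2) : E d N) := by
    refine Prod.ext ?_ (Prod.ext ?_ ?_) <;> simp
  have hadd : fderiv ℝ f x w
      = fderiv ℝ f x (w.1, w.2.1, (0 : Fin N → ℝ)) + fderiv ℝ f x ((0, 0, w.2.2) : E d N) := by
    conv_lhs => rw [hsplit]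
    rw [map_add]
  have hT : fderiv ℝ f x ((0, 0, w.2.2) : E d N)
      = ∑ k : Fin N, w.2.2 k * fderiv ℝ f x (0, 0, Pi.single k 1) := by
    rw [clm_expand d N (fderiv ℝ f x) ((0, 0, w.2.2) : E d N)]
    simp
  rw [dM, hadd, hT]
  ring

lemma swap2 (c e : Fin N → ℝ) (M M' : Fin N → Fin d → ℝ) :
    ∑ i : Fin d, (∑ k : Fin N, c k * M k i) * (∑ k : Fin N, e k * M' k i)
      = ∑ k : Fin N, ∑ l : Fin N, c k * e l * ∑ i : Fin d, M k i * M' l i := by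
  have h : ∀ i : Fin d, (∑ k : Fin N, c k * M k i) * (∑ k : Fin N, e k * M' k i)
      = ∑ k : Fin N, ∑ l : Fin N, c k * e l * (M k i * M' l i) := by
    intro i
    rw [Finset.sum_mul_sum]
    exact Finset.sum_congr rfl fun k _ => Finset.sum_congr rfl fun l _ => by ring
  rw [Finset.sum_congr rfl fun i _ => h i, Finset.sum_comm]
  refine Finset.sum_congr rfl fun k _ => ?_
  rw [Finset.sum_comm]
  exact Finset.sum_congr rfl fun l _ => by rw [Finset.mul_sum]

lemma key_algebra (au av bu bv : Fin d → ℝ) (A B : Fin N → Fin d → ℝ)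
    (C : Fin N → Fin N → ℝ) (s t : Fin N → ℝ)
    (hP : ∀ k l, ∑ i : Fin d, (A k i * B l i - B k i * A l i) = 0)
    (hC : ∀ k l, C k l = C l k) :
    ∑ i : Fin d,
      ((au i + ∑ k : Fin N, s k * B k i) * (bv i - ∑ k : Fin N, t k * A k i)
        - (av i + ∑ k : Fin N, t k * B k i) * (bu i - ∑ k : Fin N, s k * A k i))
    = ∑ i : Fin d, (au i * bv i - av i * bu i)
      - ∑ k : Fin N,
        ((∑ i : Fin d, au i * A k i + ∑ i : Fin d, bu i * B k i + ∑ l : Fin N, s l * C k l) * t k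
          - (∑ i : Fin d, av i * A k i + ∑ i : Fin d, bv i * B k i + ∑ l : Fin N, t l * C k l) * s k) := by
  have step1 : ∀ i : Fin d,
      (au i + ∑ k : Fin N, s k * B k i) * (bv i - ∑ k : Fin N, t k * A k i)
        - (av i + ∑ k : Fin N, t k * B k i) * (bu i - ∑ k : Fin N, s k * A k i)
      = (au i * bv i - av i * bu i)
        + ((∑ k : Fin N, s k * B k i) * bv i + (∑ k : Fin N, s k * A k i) * av i
           - ((∑ k : Fin N, t k * A k i) * au i + (∑ k : Fin N, t k * B k i) * bu i))
        + ((∑ k : Fin N, t k * B k i) * (∑ k : Fin N, s k * A k i)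
           - (∑ k : Fin N, s k * B k i) * (∑ k : Fin N, t k * A k i)) := fun i => by ring
  rw [Finset.sum_congr rfl fun i _ => step1 i, Finset.sum_add_distrib, Finset.sum_add_distrib]
  have cross : ∑ i : Fin d, ((∑ k : Fin N, t k * B k i) * (∑ k : Fin N, s k * A k i)
      - (∑ k : Fin N, s k * B k i) * (∑ k : Fin N, t k * A k i)) = 0 := by
    rw [Finset.sum_sub_distrib, swap2, swap2]
    rw [Finset.sum_comm (f := fun k l => s k * t l * ∑ i : Fin d, B k i * A l i)]
    rw [← Finset.sum_sub_distrib]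
    refine Finset.sum_eq_zero fun k _ => ?_
    rw [← Finset.sum_sub_distrib]
    refine Finset.sum_eq_zero fun l _ => ?_
    have hM : ∑ i : Fin d, B k i * A l i = ∑ i : Fin d, B l i * A k i := by
      have h0 := hP k l
      rw [Finset.sum_sub_distrib, sub_eq_zero] at h0
      calc ∑ i : Fin d, B k i * A l i = ∑ i : Fin d, A k i * B l i := by
            rw [← h0]
        _ = ∑ i : Fin d, B l i * A k i := Finset.sum_congr rfl fun i _ => by ring
    rw [hM]
    ring
  rw [cross, add_zero]
  have e1 : ∀ (c : Fin N → ℝ) (g : Fin d → ℝ) (M : Fin N → Fin d → ℝ),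
      ∑ x : Fin d, ∑ i : Fin N, c i * M i x * g x = ∑ x : Fin N, ∑ i : Fin d, g i * M x i * c x := by
    intro c g M
    rw [Finset.sum_comm]
    exact Finset.sum_congr rfl fun k _ => Finset.sum_congr rfl fun i _ => by ring
  have hCc : ∑ x : Fin N, ∑ i : Fin N, s i * C x i * t x
      = ∑ x : Fin N, ∑ i : Fin N, t i * C x i * s x := by
    rw [Finset.sum_comm]
    exact Finset.sum_congr rfl fun k _ => Finset.sum_congr rfl fun l _ => by rw [hC l k]; ring
  simp only [Finset.sum_sub_distrib, Finset.sum_add_distrib, add_mul, Finset.sum_mul]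
  rw [e1 s bv B, e1 s av A, e1 t au A, e1 t bu B]
  linear_combination hCc

/-- If `(p_i,q_i)` and `(P_i,Q_i)` are Darboux coordinates related by a
time-dependent canonical transformation, i.e.
`Σ dP_i∧dQ_i = Σ d_M p_i ∧ d_M q_i` with `p, q` evolving in the times by
Hamilton's equations with Hamiltonians `H_k` satisfying `{H_k,H_ℓ} = 0` and
`∂_{t_ℓ}H_k = ∂_{t_k}H_ℓ`, then
`Σ dP_i∧dQ_i = Σ dp_i∧dq_i - Σ dH_k∧dt_k` (full differentials in `(P,Q,t)`). -/
theorem canonical_two_form_identity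
    (p q : Fin d → E d N → ℝ) (Hfun : Fin N → E d N → ℝ)
    (hp : ∀ i, Differentiable ℝ (p i)) (hq : ∀ i, Differentiable ℝ (q i))
    (hH : ∀ k, Differentiable ℝ (Hfun k))
    -- `π x = (p(x), q(x), t)`: the Hamiltonians are functions of `(p,q,t)`
    (π : E d N → E d N) (hπ : ∀ x, π x = (fun i => p i x, fun i => q i x, x.2.2))
    (H : Fin N → E d N → ℝ) (hHdef : ∀ k x, H k x = Hfun k (π x))
    -- Hamilton's equations `∂p_i/∂t_k = -∂H_k/∂q_i`, `∂q_i/∂t_k = ∂H_k/∂p_i`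
    (hHam_p : ∀ x k i,
      fderiv ℝ (p i) x (0, 0, Pi.single k 1) =
        -fderiv ℝ (Hfun k) (π x) (0, Pi.single i 1, 0))
    (hHam_q : ∀ x k i,
      fderiv ℝ (q i) x (0, 0, Pi.single k 1) =
        fderiv ℝ (Hfun k) (π x) (Pi.single i 1, 0, 0))
    -- `{H_k, H_ℓ} = 0`
    (hPoisson : ∀ y k ℓ, ∑ i : Fin d,
      (fderiv ℝ (Hfun k) y (Pi.single i 1, 0, 0) *
        fderiv ℝ (Hfun ℓ) y (0, Pi.single i 1, 0)
      - fderiv ℝ (Hfun k) y (0, Pi.single i 1, 0) *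
        fderiv ℝ (Hfun ℓ) y (Pi.single i 1, 0, 0)) = 0)
    -- `∂_{t_ℓ} H_k = ∂_{t_k} H_ℓ`
    (hcompat : ∀ y k ℓ,
      fderiv ℝ (Hfun k) y (0, 0, Pi.single ℓ 1) =
        fderiv ℝ (Hfun ℓ) y (0, 0, Pi.single k 1))
    -- `Σ dP_i∧dQ_i = Σ d_M p_i ∧ d_M q_i`
    (hcan : ∀ x u v : E d N,
      ∑ i : Fin d, (u.1 i * v.2.1 i - v.1 i * u.2.1 i) =
        ∑ i : Fin d, (dM d N (p i) x u * dM d N (q i) x v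
          - dM d N (p i) x v * dM d N (q i) x u)) :
    ∀ x u v : E d N,
      ∑ i : Fin d, (u.1 i * v.2.1 i - v.1 i * u.2.1 i) =
        ∑ i : Fin d, wedge d N (p i) (q i) x u v
          - ∑ k : Fin N,
              (fderiv ℝ (H k) x u * v.2.2 k - fderiv ℝ (H k) x v * u.2.2 k) := by
  intro x u v
  -- derivative of π
  set Dπ : E d N →L[ℝ] E d N :=
    (ContinuousLinearMap.pi fun i => fderiv ℝ (p i) x).prod
      ((ContinuousLinearMap.pi fun i => fderiv ℝ (q i) x).prod
        ((ContinuousLinearMap.snd ℝ (Fin d → ℝ) (Fin N → ℝ)).comp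
          (ContinuousLinearMap.snd ℝ (Fin d → ℝ) ((Fin d → ℝ) × (Fin N → ℝ))))) with hDπ
  have hπd : HasFDerivAt π Dπ x := by
    have hfun : π = fun x => ((fun i => p i x), (fun i => q i x), x.2.2) := funext hπ
    rw [hfun, hDπ]
    refine HasFDerivAt.prodMk ?_ (HasFDerivAt.prodMk ?_ ?_)
    · exact hasFDerivAt_pi.2 fun i => ((hp i) x).hasFDerivAt
    · exact hasFDerivAt_pi.2 fun i => ((hq i) x).hasFDerivAt
    · exact ((ContinuousLinearMap.snd ℝ (Fin d → ℝ) (Fin N → ℝ)).comp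
        (ContinuousLinearMap.snd ℝ (Fin d → ℝ) ((Fin d → ℝ) × (Fin N → ℝ)))).hasFDerivAt
  -- chain rule for H k
  have hDH : ∀ (k : Fin N) (w : E d N),
      fderiv ℝ (H k) x w
        = fderiv ℝ (Hfun k) (π x)
            (fun i => fderiv ℝ (p i) x w, fun i => fderiv ℝ (q i) x w, w.2.2) := by
    intro k w
    have hk : HasFDerivAt (H k) ((fderiv ℝ (Hfun k) (π x)).comp Dπ) x := by
      have hfun : H k = fun z => Hfun k (π z) := funext (hHdef k)
      rw [hfun]
      exact (((hH k) (π x)).hasFDerivAt.comp x hπd)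
    rw [hk.fderiv]
    rfl
  -- expanded derivative of H k
  have hDHe : ∀ (k : Fin N) (w : E d N),
      fderiv ℝ (H k) x w
        = ∑ i : Fin d, fderiv ℝ (p i) x w * fderiv ℝ (Hfun k) (π x) (Pi.single i 1, 0, 0)
          + ∑ i : Fin d, fderiv ℝ (q i) x w * fderiv ℝ (Hfun k) (π x) (0, Pi.single i 1, 0)
          + ∑ l : Fin N, w.2.2 l * fderiv ℝ (Hfun k) (π x) (0, 0, Pi.single l 1) := by
    intro k w
    rw [hDH k w, clm_expand]
  -- dM formulas via Hamilton's equations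
  have hdMp : ∀ (i : Fin d) (w : E d N),
      dM d N (p i) x w = fderiv ℝ (p i) x w
        + ∑ k : Fin N, w.2.2 k * fderiv ℝ (Hfun k) (π x) (0, Pi.single i 1, 0) := by
    intro i w
    rw [dM_eq]
    simp only [hHam_p x, mul_neg, Finset.sum_neg_distrib, sub_neg_eq_add]
  have hdMq : ∀ (i : Fin d) (w : E d N),
      dM d N (q i) x w = fderiv ℝ (q i) x w
        - ∑ k : Fin N, w.2.2 k * fderiv ℝ (Hfun k) (π x) (Pi.single i 1, 0, 0) := by
    intro i w
    rw [dM_eq]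
    simp only [hHam_q x]
  rw [hcan x u v]
  simp only [hdMp, hdMq, hDHe, wedge]
  exact key_algebra d N (fun i => fderiv ℝ (p i) x u) (fun i => fderiv ℝ (p i) x v)
    (fun i => fderiv ℝ (q i) x u) (fun i => fderiv ℝ (q i) x v)
    (fun k i => fderiv ℝ (Hfun k) (π x) (Pi.single i 1, 0, 0))
    (fun k i => fderiv ℝ (Hfun k) (π x) (0, Pi.single i 1, 0))
    (fun k l => fderiv ℝ (Hfun k) (π x) (0, 0, Pi.single l 1))
    u.2.2 v.2.2 (hPoisson (π x)) (hcompat (π x))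

end TimeDependentCanonical
end

section
/- Let A₁,…,A_N be n×n trace-free matrices depending smoothly on distinct times t₁,…,t_N and satisfying the Schlesinger system ∂A_k/∂t_j = [A_k,A_j]/(t_k - t_j) for j ≠ k and ∂A_j/∂t_j = -Σ_{k≠j} [A_k,A_j]/(t_k - t_j). Then the Hamiltonians H_k = Σ_{j≠k} tr(A_j A_k)/(t_k - t_j) satisfy the compatibility (closedness) condition ∂H_k/∂t_ℓ = ∂H_ℓ/∂t_k for all k, ℓ, so that Σ_k H_k dt_k is a closed one-form in the times. -/
/-!
Differentiating `H_k = Σ_{j≠k} tr(A_j A_k)/(t_k - t_j)` in `t_ℓ` (`ℓ ≠ k`) gives two kinds of terms.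
Differentiating the denominators only touches the summand `j = ℓ` and yields
`tr(A_ℓ A_k)/(t_k - t_ℓ)²`, which is symmetric in `k, ℓ`. Differentiating the numerators with the
Schlesinger equations expresses everything through `W_j = tr([A_j, A_ℓ] A_k)`, using
`tr(X [Y, Z]) = -tr([X, Z] Y)`, and these terms cancel: `W_k = W_ℓ = 0`, and the partial fraction
`1/(t_j - t_ℓ) - 1/(t_k - t_ℓ) = (t_k - t_j)/((t_j - t_ℓ)(t_k - t_ℓ))` turns the summands with
`j ≠ ℓ` into exactly the negative of the summand `j = ℓ`, which `∂A_ℓ/∂t_ℓ` supplies.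
-/

open Matrix

namespace SchlesingerHamiltonians

variable (nn N : ℕ)

noncomputable def DA (A : (Fin N → ℂ) → Matrix (Fin nn) (Fin nn) ℂ)
    (k : Fin N) (t : Fin N → ℂ) : Matrix (Fin nn) (Fin nn) ℂ :=
  Matrix.of fun a b => fderiv ℂ (fun s => A s a b) t (Pi.single k 1)

open Finset

theorem trace_mul_commutator {m R : Type*} [Fintype m] [CommRing R] (X Y Z : Matrix m m R) :
    trace (X * (Y * Z - Z * Y)) = -trace ((X * Z - Z * X) * Y) := by
  simp only [Matrix.mul_sub, Matrix.sub_mul, trace_sub, Matrix.mul_assoc]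
  rw [trace_mul_cycle' X Y Z]
  ring

theorem trace_commutator_mul_self {m R : Type*} [Fintype m] [CommRing R] (X Y : Matrix m m R) :
    trace ((X * Y - Y * X) * X) = 0 := by
  rw [Matrix.sub_mul, trace_sub, Matrix.mul_assoc, trace_mul_comm X, sub_self]

section Calculus

variable {𝕜 : Type*} [NontriviallyNormedField 𝕜]

section TraceMul

variable {E : Type*} [NormedAddCommGroup E] [NormedSpace 𝕜 E] {m : Type*} [Fintype m]
  {X Y : E → Matrix m m 𝕜} {t : E}

theorem differentiableAt_trace_mul (hX : ∀ a b, DifferentiableAt 𝕜 (fun s => X s a b) t)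
    (hY : ∀ a b, DifferentiableAt 𝕜 (fun s => Y s a b) t) :
    DifferentiableAt 𝕜 (fun s => trace (X s * Y s)) t :=
  DifferentiableAt.fun_sum fun a _ => DifferentiableAt.fun_sum fun b _ => (hX a b).mul (hY b a)

theorem fderiv_trace_mul_apply (hX : ∀ a b, DifferentiableAt 𝕜 (fun s => X s a b) t)
    (hY : ∀ a b, DifferentiableAt 𝕜 (fun s => Y s a b) t) (v : E) :
    fderiv 𝕜 (fun s => trace (X s * Y s)) t v =
      trace (of (fun a b => fderiv 𝕜 (fun s => X s a b) t v) * Y t) +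
        trace (X t * of (fun a b => fderiv 𝕜 (fun s => Y s a b) t v)) := by
  have h := HasFDerivAt.fun_sum (u := univ) fun a _ => HasFDerivAt.fun_sum (u := univ) fun b _ =>
    (hX a b).hasFDerivAt.fun_mul (hY b a).hasFDerivAt
  rw [show (fun s => trace (X s * Y s)) = fun s => ∑ a, ∑ b, X s a b * Y s b a from rfl, h.fderiv]
  simp only [_root_.sum_apply, _root_.add_apply, _root_.smul_apply, smul_eq_mul, sum_add_distrib,
    trace, Matrix.diag, mul_apply, of_apply]
  rw [add_comm]
  congr 1
  exact sum_congr rfl fun a _ => sum_congr rfl fun b _ => mul_comm _ _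

end TraceMul

section DivSub

variable {ι : Type*} [Fintype ι] {f : (ι → 𝕜) → 𝕜} {t : ι → 𝕜} {j k : ι}

theorem differentiableAt_div_sub (hf : DifferentiableAt 𝕜 f t) (hjk : t k ≠ t j) :
    DifferentiableAt 𝕜 (fun s => f s / (s k - s j)) t := by
  simpa only [div_eq_mul_inv] using
    hf.fun_mul
      (((differentiableAt_apply k t).fun_sub (differentiableAt_apply j t)).fun_inv (sub_ne_zero.2 hjk))

theorem fderiv_div_sub_apply (hf : DifferentiableAt 𝕜 f t) (hjk : t k ≠ t j) (v : ι → 𝕜) :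
    fderiv 𝕜 (fun s => f s / (s k - s j)) t v =
      fderiv 𝕜 f t v / (t k - t j) - f t * (v k - v j) / (t k - t j) ^ 2 := by
  have hden : HasFDerivAt (fun s : ι → 𝕜 => s k - s j)
      (ContinuousLinearMap.proj (R := 𝕜) (φ := fun _ : ι => 𝕜) k - ContinuousLinearMap.proj j) t :=
    (hasFDerivAt_apply k t).sub (hasFDerivAt_apply j t)
  have h := hf.hasFDerivAt.fun_mul ((hasDerivAt_inv (sub_ne_zero.2 hjk)).comp_hasFDerivAt t hden)
  simp only [Function.comp_def] at h
  simp only [div_eq_mul_inv, h.fderiv, _root_.add_apply, _root_.smul_apply, _root_.sub_apply,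
    ContinuousLinearMap.proj_apply, smul_eq_mul, neg_mul, mul_neg]
  ring

end DivSub

end Calculus

section Hamiltonians

variable {nn N} {A : Fin N → (Fin N → ℂ) → Matrix (Fin nn) (Fin nn) ℂ} {t : Fin N → ℂ}

theorem fderiv_hamiltonian_apply_single
    (hdiff : ∀ j a b, DifferentiableAt ℂ (fun s => A j s a b) t)
    (hdist : ∀ i j, i ≠ j → t i ≠ t j) (k ℓ : Fin N) :
    fderiv ℂ (fun s => ∑ j ∈ univ.erase k, trace (A j s * A k s) / (s k - s j)) t
        (Pi.single ℓ 1) =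
      ∑ j ∈ univ.erase k,
        ((trace (DA nn N (A j) ℓ t * A k t) + trace (A j t * DA nn N (A k) ℓ t)) / (t k - t j) -
          trace (A j t * A k t) * ((Pi.single ℓ 1 : Fin N → ℂ) k - (Pi.single ℓ 1 : Fin N → ℂ) j) / (t k - t j) ^ 2) := by
  have hne : ∀ j ∈ univ.erase k, t k ≠ t j := fun j hj => hdist k j (ne_of_mem_erase hj).symm
  rw [fderiv_fun_sum fun j hj =>
      differentiableAt_div_sub (differentiableAt_trace_mul (hdiff j) (hdiff k)) (hne j hj),
    _root_.sum_apply]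
  refine sum_congr rfl fun j hj => ?_
  rw [fderiv_div_sub_apply (differentiableAt_trace_mul (hdiff j) (hdiff k)) (hne j hj),
    fderiv_trace_mul_apply (hdiff j) (hdiff k)]
  rfl

theorem sum_trace_deriv_mul_div_eq_zero (hdist : ∀ i j, i ≠ j → t i ≠ t j)
    (hSch : ∀ j k, j ≠ k →
      DA nn N (A k) j t = (t k - t j)⁻¹ • (A k t * A j t - A j t * A k t))
    (hSch' : ∀ j, DA nn N (A j) j t =
      -∑ k ∈ univ.erase j, (t k - t j)⁻¹ • (A k t * A j t - A j t * A k t))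
    {k ℓ : Fin N} (hkℓ : k ≠ ℓ) :
    ∑ j ∈ univ.erase k,
      (trace (DA nn N (A j) ℓ t * A k t) + trace (A j t * DA nn N (A k) ℓ t)) / (t k - t j) = 0 := by
  set W : Fin N → ℂ := fun j => trace ((A j t * A ℓ t - A ℓ t * A j t) * A k t)
  have hW_k : W k = 0 := trace_commutator_mul_self _ _
  have hW_ℓ : W ℓ = 0 := by simp only [W, sub_self, Matrix.zero_mul, trace_zero]
  have hleft : ∀ j, j ≠ ℓ → trace (DA nn N (A j) ℓ t * A k t) = W j / (t j - t ℓ) := by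
    intro j hj
    rw [hSch ℓ j hj.symm, smul_mul, trace_smul, smul_eq_mul, inv_mul_eq_div]
  have hright : ∀ j, trace (A j t * DA nn N (A k) ℓ t) = -W j / (t k - t ℓ) := by
    intro j
    rw [hSch ℓ k hkℓ.symm, Matrix.mul_smul, trace_smul, trace_mul_commutator, smul_eq_mul, inv_mul_eq_div]
  have hdiag : trace (DA nn N (A ℓ) ℓ t * A k t) = -∑ m ∈ univ.erase ℓ, W m / (t m - t ℓ) := by
    simp only [hSch' ℓ, Matrix.neg_mul, trace_neg, sum_mul, trace_sum, smul_mul, trace_smul,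
      smul_eq_mul, inv_mul_eq_div, W]
  have hoff : ∀ j ∈ (univ.erase k).erase ℓ,
      (trace (DA nn N (A j) ℓ t * A k t) + trace (A j t * DA nn N (A k) ℓ t)) / (t k - t j) =
        W j / (t j - t ℓ) / (t k - t ℓ) := by
    intro j hj
    obtain ⟨hjℓ, hjk, -⟩ := mem_erase.1 hj |>.imp_right mem_erase.1
    rw [hleft j hjℓ, hright j]
    have := sub_ne_zero.2 (hdist k j hjk.symm)
    have := sub_ne_zero.2 (hdist j ℓ hjℓ)
    have := sub_ne_zero.2 (hdist k ℓ hkℓ)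
    field_simp
    ring
  rw [← add_sum_erase _ _ (mem_erase.2 ⟨hkℓ.symm, mem_univ ℓ⟩), sum_congr rfl hoff, ← sum_div,
    hdiag, hright, hW_ℓ, ← add_sum_erase _ _ (mem_erase.2 ⟨hkℓ, mem_univ k⟩), hW_k,
    erase_right_comm]
  ring

theorem fderiv_hamiltonian_apply_single_of_ne
    (hdiff : ∀ j a b, DifferentiableAt ℂ (fun s => A j s a b) t)
    (hdist : ∀ i j, i ≠ j → t i ≠ t j)
    (hSch : ∀ j k, j ≠ k →
      DA nn N (A k) j t = (t k - t j)⁻¹ • (A k t * A j t - A j t * A k t))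
    (hSch' : ∀ j, DA nn N (A j) j t =
      -∑ k ∈ univ.erase j, (t k - t j)⁻¹ • (A k t * A j t - A j t * A k t))
    {k ℓ : Fin N} (hkℓ : k ≠ ℓ) :
    fderiv ℂ (fun s => ∑ j ∈ univ.erase k, trace (A j s * A k s) / (s k - s j)) t
        (Pi.single ℓ 1) =
      trace (A ℓ t * A k t) / (t k - t ℓ) ^ 2 := by
  rw [fderiv_hamiltonian_apply_single hdiff hdist, sum_sub_distrib,
    sum_trace_deriv_mul_div_eq_zero hdist hSch hSch' hkℓ, zero_sub,
    sum_eq_single_of_mem ℓ (mem_erase.2 ⟨hkℓ.symm, mem_univ ℓ⟩)]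
  · simp [hkℓ, neg_div]
  · intro j _ hjℓ
    simp [hkℓ, hjℓ]

end Hamiltonians

theorem schlesinger_hamiltonians_closed
    (U : Set (Fin N → ℂ))
    (hdist : ∀ t ∈ U, ∀ i j : Fin N, i ≠ j → t i ≠ t j)
    (A : Fin N → (Fin N → ℂ) → Matrix (Fin nn) (Fin nn) ℂ)
    (hdiff : ∀ (j : Fin N) (a b : Fin nn), ∀ t ∈ U,
      DifferentiableAt ℂ (fun s => A j s a b) t)
    -- Schlesinger equations:
    (hSch : ∀ t ∈ U, ∀ j k : Fin N, j ≠ k →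
      DA nn N (A k) j t =
        (t k - t j)⁻¹ • (A k t * A j t - A j t * A k t))
    (hSch' : ∀ t ∈ U, ∀ j : Fin N,
      DA nn N (A j) j t =
        -∑ k ∈ Finset.univ.erase j,
            (t k - t j)⁻¹ • (A k t * A j t - A j t * A k t))
    (H : Fin N → (Fin N → ℂ) → ℂ)
    (hH : ∀ k t, H k t =
      ∑ j ∈ Finset.univ.erase k, Matrix.trace (A j t * A k t) / (t k - t j)) :
    ∀ t ∈ U, ∀ k ℓ : Fin N,
      fderiv ℂ (H k) t (Pi.single ℓ 1) = fderiv ℂ (H ℓ) t (Pi.single k 1) := by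
  intro t ht k ℓ
  obtain rfl | hkℓ := eq_or_ne k ℓ
  · rfl
  have hderiv {k ℓ : Fin N} (hkℓ : k ≠ ℓ) :
      fderiv ℂ (H k) t (Pi.single ℓ 1) = trace (A ℓ t * A k t) / (t k - t ℓ) ^ 2 := by
    rw [show H k = _ from funext (hH k)]
    exact fderiv_hamiltonian_apply_single_of_ne (fun j a b => hdiff j a b t ht) (hdist t ht)
      (hSch t ht) (hSch' t ht) hkℓ
  rw [hderiv hkℓ, hderiv hkℓ.symm, trace_mul_comm, sub_sq_comm]

end SchlesingerHamiltonians
end
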